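/- arXiv:math/0504582 — 2 statements merged into one kernel-verified Lean document; each statement's English description precedes it below -/
import Mathlib

section
/- For the holomorphic disk ζ ↦ (ζ, 0, 0), |ζ| ≤ 1, in ℂ³ with boundary on the totally real submanifold B = {(z₁,z₂,z₃) ∈ ℂ³ : z₁·conj(z₁) = 1, z₁·conj(z₂) = z₂, z₁·conj(z₃) = z₃}, the tangent space to B at the boundary point (ζ,0,0) (with |ζ|=1) is the real span of the vectors (iζ, 0, 0), (0, ζ^{1/2}, 0), (0, 0, ζ^{1/2}), where ζ^{1/2} is either square root of ζ. Consequently the partial Maslov indices of this disk are (2,1,1) and its total Maslov index is 4. -/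
/-!
Each linearized equation says that a coordinate is fixed by an antilinear reflection
`z ↦ w² z̄` with `|w| = 1`: for `b` and `c` take `w = σ`, and for `a`, multiplying by `-ζ`
and using `ζ ζ̄ = 1`, take `w = iζ`. The fixed set of such a reflection is the real line `ℝ w`,
since `w² z̄ = z` says exactly that `w̄ z` is real.
-/

open Complex ComplexConjugate

namespace Complex

lemma mul_conj_eq_one_of_norm_eq_one {z : ℂ} (hz : ‖z‖ = 1) : z * conj z = 1 := by
  rw [mul_conj', hz]
  norm_num

lemma sq_mul_conj_eq_self_iff {σ : ℂ} (hσ : ‖σ‖ = 1) (z : ℂ) :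
    σ ^ 2 * conj z = z ↔ ∃ s : ℝ, z = s * σ := by
  have hσσ := mul_conj_eq_one_of_norm_eq_one hσ
  constructor
  · intro h
    have h_real : conj (conj σ * z) = conj σ * z := by
      rw [map_mul, conj_conj]
      linear_combination conj σ * h - σ * conj z * hσσ
    refine ⟨(conj σ * z).re, ?_⟩
    rw [conj_eq_iff_re.mp h_real]
    linear_combination -z * hσσ
  · rintro ⟨s, rfl⟩
    simp only [map_mul, conj_ofReal]
    linear_combination (s : ℂ) * σ * hσσ

lemma mul_conj_add_conj_mul_eq_zero_iff {ζ : ℂ} (hζ : ‖ζ‖ = 1) (a : ℂ) :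
    ζ * conj a + conj ζ * a = 0 ↔ (I * ζ) ^ 2 * conj a = a := by
  have hζζ := mul_conj_eq_one_of_norm_eq_one hζ
  constructor
  · intro h
    linear_combination (-ζ) * h + a * hζζ + I_sq * ζ ^ 2 * conj a
  · intro h
    linear_combination (-conj ζ) * h - conj a * ζ * hζζ + I_sq * ζ ^ 2 * conj ζ * conj a

end Complex

/-- For the holomorphic disk `ζ ↦ (ζ,0,0)` with boundary on
the totally real submanifold
`B = {z ∈ ℂ³ : z₁·conj z₁ = 1, z₁·conj z₂ = z₂, z₁·conj z₃ = z₃}`,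
the tangent space to `B` at a boundary point `(ζ,0,0)` (with `|ζ| = 1`) —
described by the linearized equations `ζ·conj a + conj ζ·a = 0`,
`ζ·conj b = b`, `ζ·conj c = c` — is exactly the real span of the vectors
`(iζ,0,0)`, `(0,σ,0)`, `(0,0,σ)`, where `σ` is either square root of `ζ`.
(Consequently the partial Maslov indices are `(2,1,1)` and the total Maslov
index is `4`.) -/
theorem stmt_10 (ζ σ : ℂ) (hζ : ‖ζ‖ = 1) (hσ : σ ^ 2 = ζ)
    (a b c : ℂ) :
    (ζ * (starRingEnd ℂ) a + (starRingEnd ℂ) ζ * a = 0 ∧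
      ζ * (starRingEnd ℂ) b = b ∧ ζ * (starRingEnd ℂ) c = c) ↔
    ((∃ r : ℝ, a = (r : ℂ) * (Complex.I * ζ)) ∧
      (∃ s : ℝ, b = (s : ℂ) * σ) ∧ (∃ u : ℝ, c = (u : ℂ) * σ)) := by
  subst hσ
  have hσ : ‖σ‖ = 1 := by
    rwa [norm_pow, pow_eq_one_iff_of_nonneg (norm_nonneg σ) two_ne_zero] at hζ
  have hIζ : ‖I * σ ^ 2‖ = 1 := by rw [norm_mul, norm_I, hζ, one_mul]
  rw [mul_conj_add_conj_mul_eq_zero_iff hζ, sq_mul_conj_eq_self_iff hIζ,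
    sq_mul_conj_eq_self_iff hσ, sq_mul_conj_eq_self_iff hσ]
end

section
/- Let V be a finite-dimensional real vector space with a nondegenerate symmetric bilinear form, W : V → V a symmetric trace-free linear endomorphism (i.e. ⟨Wx,y⟩ = ⟨x,Wy⟩ and tr W = 0). Suppose that ⟨φ, Wφ⟩ = 0 for every null vector φ ∈ V (i.e. every φ with ⟨φ,φ⟩ = 0). If the form is indefinite of signature (1,2) on a 3-dimensional V, then W = 0. -/
/-!
Polarizing `φ ↦ g φ (W φ)` along the null vectors `u ± v`, for `g`-orthogonal `u`, `v` with
`g u u = -g v v`, shows that this quadratic form is a scalar multiple `c • g` of `g`: the pairs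
`(e₀, e₁)`, `(e₀, e₂)` and `(5 e₀, 3 e₁ + 4 e₂)` already pin down all of its Gram matrix.
By nondegeneracy `W = c • 1`, and `tr W = 3 c = 0` forces `c = 0`.
-/

namespace LinearMap.BilinForm

variable {K V : Type*} [Field K] [AddCommGroup V] [Module K V]

def VanishesOnNullCone (g B : LinearMap.BilinForm K V) : Prop :=
  ∀ φ, g φ φ = 0 → B φ φ = 0

def IsLorentzBasis (g : LinearMap.BilinForm K V) (e : Module.Basis (Fin 3) K V) : Prop :=
  ∀ i j, g (e i) (e j) = if i = j then (if i = 0 then 1 else -1) else 0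

theorem VanishesOnNullCone.apply_eq_zero_and_add_eq_zero [CharZero K]
    {g B : LinearMap.BilinForm K V} (h : VanishesOnNullCone g B) (hg : g.IsSymm) (hB : B.IsSymm)
    {u v : V} (huv : g u v = 0) (hnorm : g u u + g v v = 0) :
    B u v = 0 ∧ B u u + B v v = 0 := by
  have hvu : g v u = 0 := hg.eq u v ▸ huv
  have hplus := h (u + v) (by
    simp only [map_add, LinearMap.add_apply]; linear_combination hnorm + huv + hvu)
  have hminus := h (u - v) (by
    simp only [map_sub, LinearMap.sub_apply]; linear_combination hnorm - huv - hvu)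
  simp only [map_add, map_sub, LinearMap.add_apply, LinearMap.sub_apply, hB.eq v u]
    at hplus hminus
  constructor
  · linear_combination (hplus - hminus) / 4
  · linear_combination (hplus + hminus) / 2

theorem eq_smul_one_of_compl₂_eq_smul {g : LinearMap.BilinForm K V} (hg : g.SeparatingRight)
    {W : V →ₗ[K] V} {c : K} (h : g.compl₂ W = c • g) : W = c • 1 := by
  ext y
  refine sub_eq_zero.mp (hg _ fun x => ?_)
  have hxy := congr($h x y)
  simp only [compl₂_apply, smul_apply, smul_eq_mul] at hxy
  simp [hxy]

namespace IsLorentzBasis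

variable {g : LinearMap.BilinForm K V} {e : Module.Basis (Fin 3) K V}

theorem isSymm (he : IsLorentzBasis g e) : g.IsSymm :=
  (isSymm_iff_basis e).mpr fun i j => by
    rw [he, he]; by_cases hij : i = j <;> simp [hij, eq_comm]

theorem nondegenerate (he : IsLorentzBasis g e) : g.Nondegenerate :=
  nondegenerate_of_det_ne_zero g e <| by
    simp [Matrix.det_fin_three, BilinForm.toMatrix_apply, he _ _]

theorem eq_smul_of_vanishesOnNullCone [CharZero K] (he : IsLorentzBasis g e)
    {B : LinearMap.BilinForm K V} (h : VanishesOnNullCone g B) (hB : B.IsSymm) :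
    B = B (e 0) (e 0) • g := by
  obtain ⟨h01, h11⟩ := h.apply_eq_zero_and_add_eq_zero he.isSymm hB (u := e 0) (v := e 1)
    (by simp [he _ _]) (by simp [he _ _])
  obtain ⟨h02, h22⟩ := h.apply_eq_zero_and_add_eq_zero he.isSymm hB (u := e 0) (v := e 2)
    (by simp [he _ _]) (by simp [he _ _])
  obtain ⟨-, hdiag⟩ := h.apply_eq_zero_and_add_eq_zero he.isSymm hB (u := (5 : K) • e 0)
    (v := (3 : K) • e 1 + (4 : K) • e 2) (by simp [he _ _]) (by simp [he _ _]; norm_num)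
  simp only [map_add, map_smul, LinearMap.add_apply, LinearMap.smul_apply, smul_eq_mul,
    hB.eq (e 2) (e 1)] at hdiag
  have h12 : B (e 1) (e 2) = 0 := by linear_combination (hdiag - 9 * h11 - 16 * h22) / 24
  rw [add_eq_zero_iff_eq_neg'] at h11 h22
  refine ext_basis e fun i j => ?_
  fin_cases i <;> fin_cases j <;>
    simp [he _ _, h01, h02, h12, h11, h22, ← hB.eq (e 0), ← hB.eq (e 1)]

end IsLorentzBasis

end LinearMap.BilinForm

open LinearMap.BilinForm in
/-- Let `V ≅ ℝ³` carry a symmetric bilinear form `g` of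
Lorentz signature `(+,−,−)` (expressed via an orthogonal basis with diagonal
entries `1, −1, −1`), and let `W : V → V` be a `g`-symmetric trace-free linear
endomorphism such that `g(φ, Wφ) = 0` for every null vector `φ` (every `φ`
with `g(φ,φ) = 0`).  Then `W = 0`. -/
theorem stmt_13 {V : Type*} [AddCommGroup V] [Module ℝ V]
    [FiniteDimensional ℝ V]
    (g : V →ₗ[ℝ] V →ₗ[ℝ] ℝ)
    (e : Module.Basis (Fin 3) ℝ V)
    (he : ∀ i j, g (e i) (e j) = if i = j then (if i = 0 then 1 else -1) else 0)
    (W : V →ₗ[ℝ] V)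
    (hsym : ∀ x y : V, g (W x) y = g x (W y))
    (htr : LinearMap.trace ℝ V W = 0)
    (hnull : ∀ φ : V, g φ φ = 0 → g φ (W φ) = 0) :
    W = 0 := by
  have hlor : IsLorentzBasis g e := he
  have hB : IsSymm (g.compl₂ W) := ⟨fun x y => by
    simp only [LinearMap.compl₂_apply, ← hsym, hlor.isSymm.eq (W y)]⟩
  have hW := eq_smul_one_of_compl₂_eq_smul hlor.nondegenerate.2
    (hlor.eq_smul_of_vanishesOnNullCone (B := g.compl₂ W) hnull hB)
  rw [hW, map_smul, LinearMap.trace_one, Module.finrank_eq_card_basis e] at htr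
  have hc : g.compl₂ W (e 0) (e 0) = 0 := by simpa using htr
  rw [hW, hc, zero_smul]
end
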